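/- Let (λ_n) and (μ_n) be two nondecreasing sequences of reals tending to +∞ such that for every δ ∈ (0,1) there exist constants m¹_δ, m²_δ with λ_n − m¹_δ ≤ μ_n ≤ (1+δ)λ_n + m²_δ for all n. If lim_{λ→∞} λ^{-1} · #{n : λ_n ≤ λ} = c for some constant c > 0, then also lim_{λ→∞} λ^{-1} · #{n : μ_n ≤ λ} = c. -/

import Mathlib

/-!
Counting is monotone: the comparison `lam n - m₁ ≤ mu n ≤ (1 + δ) lam n + m₂` squeezes the
number of `mu n ≤ x` between the number of `lam n ≤ (x - m₂) / (1 + δ)` and of `lam n ≤ x + m₁`.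
Divided by `x`, these bounds tend to `c / (1 + δ)` and `c`, and `δ` can be taken arbitrarily small.
-/

open Filter Topology

section

variable {ι : Type*}

noncomputable def sublevelCount (f : ι → ℝ) (x : ℝ) : ℝ :=
  Nat.card {i | f i ≤ x}

lemma sublevelCount_le_sublevelCount {f g : ι → ℝ} {x y : ℝ} (hfin : {i | g i ≤ y}.Finite)
    (h : ∀ i, f i ≤ x → g i ≤ y) : sublevelCount f x ≤ sublevelCount g y := by
  unfold sublevelCount
  exact_mod_cast Nat.card_mono hfin h

lemma finite_setOf_le_of_tendsto_sublevelCount_div {f : ι → ℝ} {c : ℝ} (hc : c ≠ 0)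
    (h : Tendsto (fun x => sublevelCount f x / x) atTop (𝓝 c)) (x : ℝ) :
    {i | f i ≤ x}.Finite := by
  obtain ⟨y, hy, hxy⟩ :=
    ((h.eventually (eventually_ne_nhds hc)).and (eventually_ge_atTop x)).exists
  -- `Nat.card` of an infinite set is `0`
  have hcard : sublevelCount f y ≠ 0 := left_ne_zero_of_mul hy
  have hfin : {i | f i ≤ y}.Finite := Set.finite_of_ncard_ne_zero <| by
    unfold sublevelCount at hcard; exact_mod_cast hcard
  exact hfin.subset fun i hi => le_trans hi hxy

end

lemma tendsto_affine_div_atTop (a b : ℝ) : Tendsto (fun x => (a * x + b) / x) atTop (𝓝 a) := by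
  have h : Tendsto (fun x => a + b / x) atTop (𝓝 (a + 0)) :=
    tendsto_const_nhds.add (tendsto_const_nhds.div_atTop tendsto_id)
  rw [add_zero] at h
  refine h.congr' ?_
  filter_upwards [eventually_ne_atTop 0] with x hx
  field_simp

lemma Filter.Tendsto.comp_affine_div {g : ℝ → ℝ} {c a : ℝ} (b : ℝ) (ha : 0 < a)
    (h : Tendsto (fun x => g x / x) atTop (𝓝 c)) :
    Tendsto (fun x => g (a * x + b) / x) atTop (𝓝 (c * a)) := by
  have hlin : Tendsto (fun x => a * x + b) atTop atTop :=
    tendsto_atTop_add_const_right _ b (tendsto_id.const_mul_atTop ha)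
  refine ((h.comp hlin).mul (tendsto_affine_div_atTop a b)).congr' ?_
  filter_upwards [hlin.eventually (eventually_ne_atTop 0)] with x hx
  exact div_mul_div_cancel₀ hx

lemma exists_pos_lt_one_lt_div_one_add {c c' : ℝ} (h : c' < c) :
    ∃ δ : ℝ, 0 < δ ∧ δ < 1 ∧ c' < c / (1 + δ) := by
  have hcont : Tendsto (fun δ : ℝ => c / (1 + δ)) (𝓝[>] 0) (𝓝 c) := by
    have : ContinuousAt (fun δ : ℝ => c / (1 + δ)) 0 :=
      continuousAt_const.div (continuousAt_const.add continuousAt_id) (by norm_num)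
    simpa using this.tendsto.mono_left nhdsWithin_le_nhds
  obtain ⟨δ, hδc, hδ0, hδ1⟩ :=
    ((hcont.eventually (lt_mem_nhds h)).and (Ioo_mem_nhdsGT one_pos)).exists
  exact ⟨δ, hδ0, hδ1, hδc⟩

section

variable {ι : Type*} {lam mu : ι → ℝ} {c c' : ℝ}

lemma eventually_sublevelCount_div_lt_of_sub_le {m : ℝ} (hfin : ∀ x, {i | lam i ≤ x}.Finite)
    (hweyl : Tendsto (fun x => sublevelCount lam x / x) atTop (𝓝 c))
    (hle : ∀ i, lam i - m ≤ mu i) (hc' : c < c') :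
    ∀ᶠ x in atTop, sublevelCount mu x / x < c' := by
  have hupper := hweyl.comp_affine_div m one_pos
  rw [mul_one] at hupper
  filter_upwards [hupper.eventually (gt_mem_nhds hc'), eventually_gt_atTop 0] with x hx hx0
  refine lt_of_le_of_lt (div_le_div_of_nonneg_right ?_ hx0.le) hx
  exact sublevelCount_le_sublevelCount (hfin _) fun i hi => by linarith [hle i]

lemma eventually_lt_sublevelCount_div_of_le_mul_add {a m : ℝ} (ha : 0 < a)
    (hfin : ∀ x, {i | mu i ≤ x}.Finite)
    (hweyl : Tendsto (fun x => sublevelCount lam x / x) atTop (𝓝 c))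
    (hle : ∀ i, mu i ≤ a * lam i + m) (hc' : c' < c / a) :
    ∀ᶠ x in atTop, c' < sublevelCount mu x / x := by
  have hlower := hweyl.comp_affine_div (-(m / a)) (inv_pos.2 ha)
  rw [← div_eq_mul_inv] at hlower
  filter_upwards [hlower.eventually (lt_mem_nhds hc'), eventually_gt_atTop 0] with x hx hx0
  refine hx.trans_le (div_le_div_of_nonneg_right ?_ hx0.le)
  refine sublevelCount_le_sublevelCount (hfin x) fun i hi => ?_
  calc mu i ≤ a * lam i + m := hle i
    _ ≤ a * (a⁻¹ * x + -(m / a)) + m := by gcongr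
    _ = x := by field_simp; ring

end

theorem weyl_law_transfer_general
    (lam mu : ℕ → ℝ)
    (hcomp : ∀ δ : ℝ, 0 < δ → δ < 1 →
      ∃ m₁ m₂ : ℝ, ∀ n, lam n - m₁ ≤ mu n ∧ mu n ≤ (1 + δ) * lam n + m₂)
    (c : ℝ) (hc : 0 < c)
    (hweyl : Tendsto (fun x : ℝ => (Nat.card {n : ℕ | lam n ≤ x} : ℝ) / x)
      atTop (nhds c)) :
    Tendsto (fun x : ℝ => (Nat.card {n : ℕ | mu n ≤ x} : ℝ) / x)
      atTop (nhds c) := by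
  change Tendsto (fun x => sublevelCount lam x / x) atTop (𝓝 c) at hweyl
  change Tendsto (fun x => sublevelCount mu x / x) atTop (𝓝 c)
  have hfin_lam := finite_setOf_le_of_tendsto_sublevelCount_div hc.ne' hweyl
  obtain ⟨m, _, hm⟩ := hcomp (1 / 2) (by norm_num) (by norm_num)
  have hlam_le (n : ℕ) : lam n - m ≤ mu n := (hm n).1
  have hfin_mu (x : ℝ) : {n | mu n ≤ x}.Finite :=
    (hfin_lam (x + m)).subset fun n (hn : mu n ≤ x) => show lam n ≤ x + m by linarith [hlam_le n]
  refine tendsto_order.2 ⟨fun c' hc' => ?_, fun c' hc' =>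
    eventually_sublevelCount_div_lt_of_sub_le hfin_lam hweyl hlam_le hc'⟩
  obtain ⟨δ, hδ0, hδ1, hδc⟩ := exists_pos_lt_one_lt_div_one_add hc'
  obtain ⟨_, m₂, hm₂⟩ := hcomp δ hδ0 hδ1
  exact eventually_lt_sublevelCount_div_of_le_mul_add (by linarith) hfin_mu hweyl
    (fun n => (hm₂ n).2) hδc

/-- **Stability of the Weyl law under two-sided eigenvalue comparison.** If `(lam n)`
and `(mu n)` are nondecreasing sequences tending to `+∞` such that for every
`δ ∈ (0,1)` there are constants `m₁, m₂` with
`lam n - m₁ ≤ mu n ≤ (1+δ) lam n + m₂` for all `n`, and if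
`(#{n : lam n ≤ x}) / x → c > 0` as `x → ∞`, then also `(#{n : mu n ≤ x}) / x → c`. -/
theorem weyl_law_transfer
    (lam mu : ℕ → ℝ) (hlam_mono : Monotone lam) (hmu_mono : Monotone mu)
    (hlam_top : Tendsto lam atTop atTop) (hmu_top : Tendsto mu atTop atTop)
    (hcomp : ∀ δ : ℝ, 0 < δ → δ < 1 →
      ∃ m₁ m₂ : ℝ, ∀ n, lam n - m₁ ≤ mu n ∧ mu n ≤ (1 + δ) * lam n + m₂)
    (c : ℝ) (hc : 0 < c)
    (hweyl : Tendsto (fun x : ℝ => (Nat.card {n : ℕ | lam n ≤ x} : ℝ) / x)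
      atTop (nhds c)) :
    Tendsto (fun x : ℝ => (Nat.card {n : ℕ | mu n ≤ x} : ℝ) / x)
      atTop (nhds c) :=
  weyl_law_transfer_general lam mu hcomp c hc hweyl
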